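/- arXiv:1712.03347 — 5 statements merged into one kernel-verified Lean document; each statement's English description precedes it below -/
import Mathlib

section
/- Let 0 < s < 1. The integral over ℝ^n of (1 - cos(z_n))/|z|^(n+2s) dz is finite, where z_n denotes the last coordinate of z. -/
/-!
Near the origin `1 - cos zₙ ≤ zₙ² / 2 ≤ |z|² / 2`, so the integrand is at most
`|z| ^ (2 - n - 2s) / 2`, which is integrable on the unit ball because `2 - 2s > 0`. Away from
the origin the integrand is at most `2 |z| ^ (-n - 2s)`, which is integrable outside the unit ball
because `2s > 0`; both facts follow by integrating in polar coordinates.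
-/

open MeasureTheory Metric Set Real

section RadialDecay

variable {E F : Type*} [NormedAddCommGroup E] [NormedSpace ℝ E] [FiniteDimensional ℝ E]
  [MeasurableSpace E] [BorelSpace E] [NormedAddCommGroup F] {μ : Measure E} [μ.IsAddHaarMeasure]

lemma integrableOn_compl_ball_of_norm_le_rpow (hd : 1 ≤ Module.finrank ℝ E) {f : E → F}
    {C α r : ℝ} (hr : 0 < r) (hα : (Module.finrank ℝ E : ℝ) < α)
    (h_decay : ∀ᵐ x ∂μ.restrict (ball 0 r)ᶜ, ‖f x‖ ≤ C * ‖x‖ ^ (-α))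
    (h_meas : AEStronglyMeasurable f μ) :
    IntegrableOn f (ball 0 r)ᶜ μ := by
  have : Nontrivial E := Module.nontrivial_of_finrank_pos (R := ℝ) (by omega)
  set g : ℝ → ℝ := (Ici r).indicator fun y ↦ C * y ^ (-α)
  have h_radial :
      IntegrableOn (fun y ↦ C * y ^ ((Module.finrank ℝ E : ℝ) - 1 - α)) (Ici r) := by
    rw [integrableOn_Ici_iff_integrableOn_Ioi]
    exact (integrableOn_Ioi_rpow_of_lt (by linarith) hr).const_mul C
  have hg : Integrable (fun x : E ↦ g ‖x‖) μ := by
    rw [integrable_fun_norm_addHaar μ]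
    refine Integrable.integrableOn ?_
    have h_eq : (fun y ↦ y ^ (Module.finrank ℝ E - 1) • g y) =
        (Ici r).indicator fun y ↦ C * y ^ ((Module.finrank ℝ E : ℝ) - 1 - α) := by
      ext y
      by_cases hy : y ∈ Ici r
      · have hy0 : 0 < y := hr.trans_le hy
        simp only [g, indicator_of_mem hy, smul_eq_mul]
        rw [← Real.rpow_natCast, Nat.cast_sub hd, Nat.cast_one, mul_left_comm,
          ← Real.rpow_add hy0, sub_eq_add_neg _ α]
      · simp [g, hy]
    rwa [h_eq, integrable_indicator_iff measurableSet_Ici]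
  refine hg.integrableOn.mono' h_meas.restrict ?_
  filter_upwards [h_decay, ae_restrict_mem measurableSet_ball.compl] with x hx hxr
  simpa [g, indicator_of_mem (show ‖x‖ ∈ Ici r by simpa using hxr)] using hx

end RadialDecay

lemma one_sub_cos_div_rpow_le_half_mul_rpow {x r : ℝ} (hxr : |x| ≤ r) (p : ℝ) :
    (1 - cos x) / r ^ p ≤ 1 / 2 * r ^ (-(p - 2)) := by
  rcases (abs_nonneg x).trans hxr |>.eq_or_lt with hr | hr
  · subst r
    rw [abs_nonpos_iff.1 hxr, cos_zero, sub_self, zero_div]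
    positivity
  · calc (1 - cos x) / r ^ p ≤ r ^ 2 / 2 / r ^ p := by
          gcongr
          nlinarith [one_sub_sq_div_two_le_cos (x := x), sq_abs x, abs_nonneg x]
      _ = 1 / 2 * r ^ (-(p - 2)) := by
          rw [Real.rpow_neg hr.le, Real.rpow_sub hr, Real.rpow_two]
          field_simp

lemma one_sub_cos_div_rpow_le_two_mul_rpow (x : ℝ) {r : ℝ} (hr : 0 ≤ r) (p : ℝ) :
    (1 - cos x) / r ^ p ≤ 2 * r ^ (-p) := by
  rw [Real.rpow_neg hr, ← div_eq_mul_inv]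
  gcongr
  linarith [neg_one_le_cos x]

/-- For `0 < s < 1`, the integral over `ℝⁿ` of `(1 - cos zₙ)/|z|^{n+2s}` is finite,
where `zₙ` is the last coordinate of `z`. -/
theorem integrable_one_sub_cos_div_rpow
    (n : ℕ) (hn : 1 ≤ n) (s : ℝ) (hs0 : 0 < s) (hs1 : s < 1) :
    Integrable (fun z : EuclideanSpace ℝ (Fin n) =>
      (1 - Real.cos (z ⟨n - 1, by omega⟩)) / ‖z‖ ^ ((n : ℝ) + 2 * s)) := by
  set i : Fin n := ⟨n - 1, by omega⟩
  have hd : 1 ≤ Module.finrank ℝ (EuclideanSpace ℝ (Fin n)) := by simpa using hn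
  have h_meas : AEStronglyMeasurable
      (fun z : EuclideanSpace ℝ (Fin n) ↦ (1 - cos (z i)) / ‖z‖ ^ ((n : ℝ) + 2 * s)) :=
    Measurable.aestronglyMeasurable (by fun_prop)
  have h_norm (z : EuclideanSpace ℝ (Fin n)) :
      ‖(1 - cos (z i)) / ‖z‖ ^ ((n : ℝ) + 2 * s)‖ = (1 - cos (z i)) / ‖z‖ ^ ((n : ℝ) + 2 * s) :=
    Real.norm_of_nonneg (by have := cos_le_one (z i); positivity)
  rw [← integrableOn_univ, ← union_compl_self (ball 0 1), integrableOn_union]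
  constructor
  · refine integrableOn_ball_of_norm_le_rpow hd (C := 1 / 2) (α := n + 2 * s - 2)
      (by rw [finrank_euclideanSpace_fin]; linarith) (ae_of_all _ fun z ↦ ?_) h_meas
    rw [h_norm]
    exact one_sub_cos_div_rpow_le_half_mul_rpow (by simpa using PiLp.norm_apply_le z i) _
  · refine integrableOn_compl_ball_of_norm_le_rpow hd one_pos (C := 2) (α := n + 2 * s)
      (by rw [finrank_euclideanSpace_fin]; linarith) (ae_of_all _ fun z ↦ ?_) h_meas
    rw [h_norm]
    exact one_sub_cos_div_rpow_le_two_mul_rpow _ (norm_nonneg z) _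
end

section
/- For 0 < s < 1, the integral from 0 to ∞ of u^(-s-1)(1 - e^(-u)) du equals Γ(1-s)/s. -/
/-!
Integrate by parts with `u = x ^ (-s)` and `v = 1 - exp (-x)`: since `0 ≤ 1 - exp (-x) ≤ min x 1`,
the boundary terms `x ^ (-s) * (1 - exp (-x))` vanish at `0` and at `∞`, and what remains is
`s * ∫ x ^ (-s - 1) * (1 - exp (-x)) = ∫ x ^ (-s) * exp (-x) = Γ(1 - s)`.
-/

open MeasureTheory Real Set Filter Topology

namespace Real

lemma one_sub_exp_neg_nonneg {x : ℝ} (hx : 0 ≤ x) : 0 ≤ 1 - exp (-x) :=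
  sub_nonneg.2 (exp_le_one_iff.2 (neg_nonpos.2 hx))

variable {r x : ℝ}

lemma norm_rpow_mul_one_sub_exp_neg_le_rpow_add_one (hx : 0 < x) :
    ‖x ^ r * (1 - exp (-x))‖ ≤ x ^ (r + 1) := by
  rw [norm_of_nonneg (mul_nonneg (rpow_nonneg hx.le r) (one_sub_exp_neg_nonneg hx.le)),
    rpow_add_one hx.ne']
  gcongr
  linarith [one_sub_le_exp_neg x]

lemma norm_rpow_mul_one_sub_exp_neg_le_rpow (hx : 0 < x) :
    ‖x ^ r * (1 - exp (-x))‖ ≤ x ^ r := by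
  rw [norm_of_nonneg (mul_nonneg (rpow_nonneg hx.le r) (one_sub_exp_neg_nonneg hx.le))]
  exact mul_le_of_le_one_right (rpow_nonneg hx.le r) (by linarith [exp_pos (-x)])

lemma integrableOn_rpow_mul_one_sub_exp_neg (hr₁ : -2 < r) (hr₂ : r < -1) :
    IntegrableOn (fun x : ℝ ↦ x ^ r * (1 - exp (-x))) (Ioi 0) := by
  have hmeas : AEStronglyMeasurable (fun x : ℝ ↦ x ^ r * (1 - exp (-x))) :=
    (by fun_prop : Measurable fun x : ℝ ↦ x ^ r * (1 - exp (-x))).aestronglyMeasurable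
  rw [← Ioc_union_Ioi_eq_Ioi zero_le_one, integrableOn_union]
  constructor
  · have hint : IntegrableOn (fun x : ℝ ↦ x ^ (r + 1)) (Ioc 0 1) := by
      rw [← intervalIntegrable_iff_integrableOn_Ioc_of_le zero_le_one]
      exact intervalIntegral.intervalIntegrable_rpow' (by linarith)
    refine hint.mono' hmeas.restrict ?_
    filter_upwards [ae_restrict_mem measurableSet_Ioc] with x hx
    exact norm_rpow_mul_one_sub_exp_neg_le_rpow_add_one hx.1
  · refine (integrableOn_Ioi_rpow_of_lt hr₂ one_pos).mono' hmeas.restrict ?_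
    filter_upwards [ae_restrict_mem measurableSet_Ioi] with x hx
    exact norm_rpow_mul_one_sub_exp_neg_le_rpow (zero_lt_one.trans hx)

lemma tendsto_rpow_mul_one_sub_exp_neg_nhdsGT_zero (hr : -1 < r) :
    Tendsto (fun x : ℝ ↦ x ^ r * (1 - exp (-x))) (𝓝[>] 0) (𝓝 0) := by
  have hpow : Tendsto (fun x : ℝ ↦ x ^ (r + 1)) (𝓝[>] 0) (𝓝 0) := by
    have h := (continuousAt_rpow_const 0 (r + 1) (Or.inr (by linarith))).tendsto
    rw [zero_rpow (by linarith)] at h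
    exact h.mono_left nhdsWithin_le_nhds
  refine squeeze_zero_norm' ?_ hpow
  filter_upwards [self_mem_nhdsWithin] with x hx
  exact norm_rpow_mul_one_sub_exp_neg_le_rpow_add_one hx

lemma tendsto_rpow_mul_one_sub_exp_neg_atTop (hr : r < 0) :
    Tendsto (fun x : ℝ ↦ x ^ r * (1 - exp (-x))) atTop (𝓝 0) := by
  have hexp : Tendsto (fun x : ℝ ↦ 1 - exp (-x)) atTop (𝓝 1) := by
    simpa using tendsto_exp_neg_atTop_nhds_zero.const_sub 1
  simpa only [neg_neg, zero_mul] using (tendsto_rpow_neg_atTop (neg_pos.2 hr)).mul hexp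

end Real

/-- For `0 < s < 1`, `∫₀^∞ u^{-s-1}(1 - e^{-u}) du = Γ(1-s)/s`. -/
theorem integral_rpow_one_sub_exp
    (s : ℝ) (hs0 : 0 < s) (hs1 : s < 1) :
    ∫ u in Ioi (0 : ℝ), u ^ (-s - 1) * (1 - Real.exp (-u))
      = Real.Gamma (1 - s) / s := by
  have hGamma : IntegrableOn (fun x ↦ x ^ (-s) * exp (-x)) (Ioi 0) ∧
      ∫ x in Ioi 0, x ^ (-s) * exp (-x) = Gamma (1 - s) := by
    have h : 0 < 1 - s := by linarith
    simpa only [sub_sub_cancel_left, mul_comm (exp _)] using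
      And.intro (GammaIntegral_convergent h) (Gamma_eq_integral h).symm
  have hIntegrand : IntegrableOn (fun x ↦ -s * x ^ (-s - 1) * (1 - exp (-x))) (Ioi 0) := by
    have h := (integrableOn_rpow_mul_one_sub_exp_neg (r := -s - 1) (by linarith)
      (by linarith)).const_mul (-s)
    simp only [← mul_assoc] at h
    exact h
  have parts := integral_Ioi_mul_deriv_eq_deriv_mul (a' := 0) (b' := 0)
    (u := fun x ↦ x ^ (-s)) (v := fun x ↦ 1 - exp (-x))
    (fun x hx ↦ hasDerivAt_rpow_const (Or.inl (ne_of_gt hx)))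
    (fun x _ ↦ by simpa using ((hasDerivAt_neg x).exp).const_sub 1)
    hGamma.1 hIntegrand
    (tendsto_rpow_mul_one_sub_exp_neg_nhdsGT_zero (by linarith))
    (tendsto_rpow_mul_one_sub_exp_neg_atTop (by linarith))
  simp only [mul_assoc, integral_const_mul, hGamma.2] at parts
  rw [eq_div_iff hs0.ne']
  linarith
end

section
/- Let φ : ℝ^n → ℝ be continuous, bounded, nonnegative and not identically zero, and let f(x,t) = ∫ G(x-y,t)φ(y) dy be its heat extension. Then for all x, y ∈ ℝ^n and 0 < s < t, f(x,s) ≤ f(y,t) (t/s)^(n/2) exp(|x-y|²/(4(t-s))). -/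
/-!
The Harnack factor already appears pointwise, before integrating against `φ ≥ 0`: splitting
`t = s + (t - s)`, the triangle inequality and the bound `(a + b)² / (u + v) ≤ a² / u + b² / v`
give `‖y - z‖² / t ≤ ‖x - z‖² / s + ‖x - y‖² / (t - s)`, so that
`G(x - z, s) ≤ G(y - z, t) (t / s)^(n/2) exp(‖x - y‖² / (4 (t - s)))` for every `z`.
-/

open MeasureTheory Real

noncomputable def heatKernel {V : Type*} [Norm V] (d t : ℝ) (v : V) : ℝ :=
  (4 * π * t) ^ (-d / 2) * exp (-‖v‖ ^ 2 / (4 * t))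

lemma add_sq_div_add_le {a b u v : ℝ} (hu : 0 < u) (hv : 0 < v) :
    (a + b) ^ 2 / (u + v) ≤ a ^ 2 / u + b ^ 2 / v := by
  rw [div_add_div _ _ hu.ne' hv.ne', div_le_div_iff₀ (by positivity) (by positivity)]
  nlinarith [sq_nonneg (a * v - b * u), mul_pos hu hv]

lemma rpow_neg_half_mul_eq (d : ℝ) {c s t : ℝ} (hc : 0 < c) (hs : 0 < s) (ht : 0 < t) :
    (c * s) ^ (-d / 2) = (c * t) ^ (-d / 2) * (t / s) ^ (d / 2) := by
  rw [div_rpow ht.le hs.le, mul_rpow hc.le hs.le, mul_rpow hc.le ht.le, neg_div,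
    rpow_neg hc.le, rpow_neg hs.le, rpow_neg ht.le]
  have : t ^ (d / 2) ≠ 0 := (rpow_pos_of_pos ht _).ne'
  field_simp

section heatKernel

variable {V : Type*} [SeminormedAddCommGroup V]

lemma heatKernel_nonneg (d : ℝ) {t : ℝ} (ht : 0 ≤ t) (v : V) : 0 ≤ heatKernel d t v := by
  unfold heatKernel; positivity

lemma heatKernel_sub_le (d : ℝ) {s t : ℝ} (hs : 0 < s) (hst : s < t) (x y z : V) :
    heatKernel d s (x - z) ≤
      heatKernel d t (y - z) * ((t / s) ^ (d / 2) * exp (‖x - y‖ ^ 2 / (4 * (t - s)))) := by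
  have ht : 0 < t := hs.trans hst
  have hts : 0 < t - s := sub_pos.2 hst
  have htri : ‖y - z‖ ≤ ‖x - z‖ + ‖x - y‖ := by
    simpa using norm_sub_le (x - z) (x - y)
  have hsq : ‖y - z‖ ^ 2 / t ≤ ‖x - z‖ ^ 2 / s + ‖x - y‖ ^ 2 / (t - s) :=
    calc ‖y - z‖ ^ 2 / t ≤ (‖x - z‖ + ‖x - y‖) ^ 2 / (s + (t - s)) := by
          rw [add_sub_cancel]; gcongr
      _ ≤ _ := add_sq_div_add_le hs hts
  have hexp : exp (-‖x - z‖ ^ 2 / (4 * s)) ≤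
      exp (-‖y - z‖ ^ 2 / (4 * t)) * exp (‖x - y‖ ^ 2 / (4 * (t - s))) := by
    rw [← exp_add, exp_le_exp, neg_div, neg_div, div_mul_eq_div_div_swap,
      div_mul_eq_div_div_swap, div_mul_eq_div_div_swap]
    linarith
  unfold heatKernel
  rw [rpow_neg_half_mul_eq d (by positivity) hs ht]
  calc _ ≤ (4 * π * t) ^ (-d / 2) * (t / s) ^ (d / 2) *
        (exp (-‖y - z‖ ^ 2 / (4 * t)) * exp (‖x - y‖ ^ 2 / (4 * (t - s)))) := by gcongr
    _ = _ := by ring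

end heatKernel

section integrable

variable {V : Type*} [NormedAddCommGroup V] [InnerProductSpace ℝ V] [FiniteDimensional ℝ V]
  [MeasurableSpace V] [BorelSpace V]

lemma integrable_heatKernel (d : ℝ) {t : ℝ} (ht : 0 < t) :
    Integrable (heatKernel (V := V) d t) := by
  have hb : 0 < (1 / (4 * t) : ℂ).re := by simp; positivity
  have hgauss := (GaussianFourier.integrable_cexp_neg_mul_sq_norm_add hb 0 (0 : V)).norm
  refine (hgauss.const_mul ((4 * π * t) ^ (-d / 2))).congr (ae_of_all _ fun v => ?_)
  simp only [heatKernel, Complex.norm_exp, ← Complex.ofReal_pow, zero_mul, add_zero]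
  norm_cast
  ring_nf

lemma integrable_heatKernel_sub_mul (d : ℝ) {t : ℝ} (ht : 0 < t) (y : V) {φ : V → ℝ}
    (hφ : AEStronglyMeasurable φ) {M : ℝ} (hM : ∀ z, |φ z| ≤ M) :
    Integrable fun z => heatKernel d t (y - z) * φ z := by
  simp_rw [mul_comm (heatKernel d t _)]
  exact ((integrable_comp_sub_left _ y).2 (integrable_heatKernel d ht)).bdd_mul hφ
    (ae_of_all _ hM)

end integrable

theorem pini_hadamard_harnack_general
    (n : ℕ)
    (φ : EuclideanSpace ℝ (Fin n) → ℝ)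
    (hφc : Continuous φ) (hφb : ∃ M, ∀ x, |φ x| ≤ M) (hφ0 : ∀ x, 0 ≤ φ x)
    (f : EuclideanSpace ℝ (Fin n) → ℝ → ℝ)
    (hf : ∀ x t, f x t = ∫ y : EuclideanSpace ℝ (Fin n),
      (4 * π * t) ^ (-(n : ℝ) / 2) * Real.exp (-‖x - y‖ ^ 2 / (4 * t)) * φ y)
    (x y : EuclideanSpace ℝ (Fin n)) (s t : ℝ) (hs : 0 < s) (hst : s < t) :
    f x s ≤ f y t * (t / s) ^ ((n : ℝ) / 2) * Real.exp (‖x - y‖ ^ 2 / (4 * (t - s))) := by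
  obtain ⟨M, hM⟩ := hφb
  set C := (t / s) ^ ((n : ℝ) / 2) * exp (‖x - y‖ ^ 2 / (4 * (t - s)))
  have hint : Integrable fun z => heatKernel n t (y - z) * φ z * C :=
    (integrable_heatKernel_sub_mul n (hs.trans hst) y hφc.aestronglyMeasurable hM).mul_const C
  have hpointwise (z) : heatKernel n s (x - z) * φ z ≤ heatKernel n t (y - z) * φ z * C := by
    rw [mul_right_comm]
    exact mul_le_mul_of_nonneg_right (heatKernel_sub_le n hs hst x y z) (hφ0 z)
  calc f x s = ∫ z, heatKernel n s (x - z) * φ z := hf x s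
    _ ≤ ∫ z, heatKernel n t (y - z) * φ z * C :=
      integral_mono_of_nonneg (ae_of_all _ fun z => mul_nonneg (heatKernel_nonneg n hs.le _)
        (hφ0 z)) hint (ae_of_all _ hpointwise)
    _ = f y t * C := by rw [integral_mul_const, hf y t]; rfl
    _ = _ := by rw [mul_assoc]

/-- The Pini–Hadamard scale invariant Harnack inequality: for `f = P_t φ` with
`φ ≥ 0` continuous, bounded and not identically zero, and `0 < s < t`,
`f(x,s) ≤ f(y,t) (t/s)^{n/2} exp(|x-y|²/(4(t-s)))`. -/
theorem pini_hadamard_harnack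
    (n : ℕ) (hn : 1 ≤ n)
    (φ : EuclideanSpace ℝ (Fin n) → ℝ)
    (hφc : Continuous φ) (hφb : ∃ M, ∀ x, |φ x| ≤ M) (hφ0 : ∀ x, 0 ≤ φ x)
    (hφne : ∃ z, φ z ≠ 0)
    (f : EuclideanSpace ℝ (Fin n) → ℝ → ℝ)
    (hf : ∀ x t, f x t = ∫ y : EuclideanSpace ℝ (Fin n),
      (4 * π * t) ^ (-(n : ℝ) / 2) * Real.exp (-‖x - y‖ ^ 2 / (4 * t)) * φ y)
    (x y : EuclideanSpace ℝ (Fin n)) (s t : ℝ) (hs : 0 < s) (hst : s < t) :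
    f x s ≤ f y t * (t / s) ^ ((n : ℝ) / 2) * Real.exp (‖x - y‖ ^ 2 / (4 * (t - s))) :=
  pini_hadamard_harnack_general n φ hφc hφb hφ0 f hf x y s t hs hst
end

section
/- Let -1 < a < 1 and n ≥ 2, and define G(x,y) = (|x|² + y²)^(-(n+a-1)/2) on ℝ^n × ℝ with (x,y) ≠ (0,0). Then for all (x,y) with y ≠ 0, G satisfies the extension equation div_{x,y}(|y|^a ∇_{x,y} G) = 0, i.e. Δ_x G + ∂²_y G + (a/y) ∂_y G = 0. -/
open Real

/-
Every second partial derivative of `G = S ^ p`, with `S = |x|² + y²` and `p = -(n+a-1)/2`,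
is a one-variable derivative of `t ↦ (c + t²) ^ p`, whose derivatives are
`2p t (c+t²)^(p-1)` and `4p(p-1) t² (c+t²)^(p-2) + 2p (c+t²)^(p-1)`. Summing the `n + 1`
second derivatives and adding `(a/y) ∂_y G = 2ap S^(p-1)` gives
`2p S^(p-1) (2(p-1) + n + 1 + a)`, and the last factor vanishes for this choice of `p`.
-/

theorem Finset.sum_comp_update {ι M : Type*} [Fintype ι] [DecidableEq ι] [AddCommGroup M]
    {α : Type*} (f : α → M) (x : ι → α) (i : ι) (t : α) :
    ∑ j, f (Function.update x i t j) = ∑ j, f (x j) - f (x i) + f t := by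
  have hcomp : (fun j => f (Function.update x i t j)) = Function.update (f ∘ x) i (f t) :=
    Function.comp_update f x i t
  rw [hcomp, Finset.sum_update_of_mem (Finset.mem_univ i), Finset.sdiff_singleton_eq_erase,
    Finset.sum_erase_eq_sub (Finset.mem_univ i)]
  simp only [Function.comp_apply]
  abel

section AddSqRpow

variable {c p t : ℝ}

theorem hasDerivAt_add_sq_rpow (h : 0 < c + t ^ 2) :
    HasDerivAt (fun s => (c + s ^ 2) ^ p) (p * (c + t ^ 2) ^ (p - 1) * (2 * t)) t := by
  have hinner : HasDerivAt (fun s : ℝ => c + s ^ 2) (2 * t) t := by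
    simpa using (hasDerivAt_pow 2 t).const_add c
  simpa [mul_assoc, Function.comp_def] using
    (Real.hasDerivAt_rpow_const (p := p) (Or.inl h.ne')).comp t hinner

theorem deriv_add_sq_rpow (h : 0 < c + t ^ 2) :
    deriv (fun s => (c + s ^ 2) ^ p) t = p * (c + t ^ 2) ^ (p - 1) * (2 * t) :=
  (hasDerivAt_add_sq_rpow h).deriv

theorem deriv_deriv_add_sq_rpow (h : 0 < c + t ^ 2) :
    deriv (fun s => deriv (fun r => (c + r ^ 2) ^ p) s) t
      = p * (p - 1) * (c + t ^ 2) ^ (p - 2) * (2 * t) ^ 2 + p * (c + t ^ 2) ^ (p - 1) * 2 := by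
  have hpos : ∀ᶠ s in nhds t, 0 < c + s ^ 2 :=
    (isOpen_lt continuous_const (by fun_prop)).mem_nhds h
  have hderiv : (fun s => deriv (fun r => (c + r ^ 2) ^ p) s)
      =ᶠ[nhds t] fun s => p * (c + s ^ 2) ^ (p - 1) * (2 * s) :=
    hpos.mono fun s hs => deriv_add_sq_rpow hs
  have hlin : HasDerivAt (fun s : ℝ => 2 * s) 2 t := by
    simpa using (hasDerivAt_id t).const_mul (2 : ℝ)
  have hd := ((hasDerivAt_add_sq_rpow (p := p - 1) h).const_mul p).mul hlin
  rw [hderiv.deriv_eq,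
    (show HasDerivAt (fun s => p * (c + s ^ 2) ^ (p - 1) * (2 * s)) _ t from hd).deriv,
    show p - 1 - 1 = p - 2 by ring]
  ring

end AddSqRpow

theorem extension_fundamental_solution_general
    (n : ℕ) (a : ℝ)
    (G : (Fin n → ℝ) → ℝ → ℝ)
    (hG : ∀ x y, G x y = (∑ i, (x i) ^ 2 + y ^ 2) ^ (-((n : ℝ) + a - 1) / 2))
    (x : Fin n → ℝ) (y : ℝ) (hy : y ≠ 0) :
    (∑ i, deriv (fun t => deriv (fun t' => G (Function.update x i t') y) t) (x i))
      + deriv (fun t => deriv (fun t' => G x t') t) y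
      + (a / y) * deriv (fun t' => G x t') y = 0 := by
  set p : ℝ := -((n : ℝ) + a - 1) / 2 with hp
  set Q : ℝ := ∑ i, x i ^ 2
  have hS : 0 < Q + y ^ 2 := by positivity
  have hx_slice : ∀ i, (fun t' => G (Function.update x i t') y)
      = fun t' => ((Q - x i ^ 2 + y ^ 2) + t' ^ 2) ^ p := by
    intro i
    funext t'
    rw [hG, Finset.sum_comp_update (· ^ 2)]
    congr 1
    ring
  have hx_term : ∀ i, deriv (fun t => deriv (fun t' => G (Function.update x i t') y) t) (x i)
      = p * (p - 1) * (Q + y ^ 2) ^ (p - 2) * (2 * x i) ^ 2 + p * (Q + y ^ 2) ^ (p - 1) * 2 := by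
    intro i
    have hc : Q - x i ^ 2 + y ^ 2 + x i ^ 2 = Q + y ^ 2 := by ring
    rw [hx_slice i, deriv_deriv_add_sq_rpow (hc ▸ hS), hc]
  have hy_slice : (fun t' => G x t') = fun t' => (Q + t' ^ 2) ^ p := funext fun t' => hG x t'
  have hsq : ∑ i, (2 * x i) ^ 2 = 4 * Q := by
    simp only [mul_pow, ← Finset.mul_sum]
    norm_num [Q]
  have hpow : (Q + y ^ 2) ^ (p - 1) = (Q + y ^ 2) ^ (p - 2) * (Q + y ^ 2) := by
    rw [← Real.rpow_add_one hS.ne']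
    congr 1
    ring
  rw [Finset.sum_congr rfl fun i _ => hx_term i, hy_slice, deriv_deriv_add_sq_rpow hS,
    deriv_add_sq_rpow hS, Finset.sum_add_distrib, ← Finset.mul_sum, hsq, Finset.sum_const,
    Finset.card_univ, Fintype.card_fin, nsmul_eq_mul, hpow]
  generalize (Q + y ^ 2) ^ (p - 2) = A
  field_simp
  rw [hp]
  ring

/-- The function `G(x,y) = (|x|² + y²)^{-(n+a-1)/2}` solves the Caffarelli–Silvestre
extension equation `Δₓ G + ∂²_y G + (a/y) ∂_y G = 0` away from `{y = 0}`. -/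
theorem extension_fundamental_solution
    (n : ℕ) (hn : 2 ≤ n) (a : ℝ) (ha1 : -1 < a) (ha2 : a < 1)
    (G : (Fin n → ℝ) → ℝ → ℝ)
    (hG : ∀ x y, G x y = (∑ i, (x i) ^ 2 + y ^ 2) ^ (-((n : ℝ) + a - 1) / 2))
    (x : Fin n → ℝ) (y : ℝ) (hy : y ≠ 0) :
    (∑ i, deriv (fun t => deriv (fun t' => G (Function.update x i t') y) t) (x i))
      + deriv (fun t => deriv (fun t' => G x t') t) y
      + (a / y) * deriv (fun t' => G x t') y = 0 :=
  extension_fundamental_solution_general n a G hG x y hy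
end

section
/- Let 0 < s < 1 and r > 0. Define A_r^(s)(y) = c(n,s) · r^(2s) / ((|y|² - r²)^s |y|^n) for |y| > r and 0 for |y| ≤ r, where c(n,s) = 2 sin(πs)/(π σ_{n-1}) and σ_{n-1} is the surface measure of the unit sphere in ℝ^n. Then ∫_{ℝ^n} A_r^(s)(y) dy = 1. -/
/-!
In polar coordinates the mass of the kernel is `c(n,s) σ_{n-1} r^{2s} ∫_r^∞ (ρ² - r²)^{-s} ρ⁻¹ dρ`.
The substitution `u = 1 - r²/ρ²` turns the radial integral into `B(1 - s, s) / (2 r^{2s})`, and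
`B(1 - s, s) = Γ(1 - s) Γ(s) = π / sin (π s)` by the reflection formula, which cancels the
normalising constant `c(n,s) = 2 sin (π s) / (π σ_{n-1})`.
-/

open MeasureTheory Real Set

theorem integral_Ioo_rpow_mul_one_sub_rpow {a b : ℝ} (ha : 0 < a) (hb : 0 < b) :
    ∫ u in Ioo (0 : ℝ) 1, u ^ (a - 1) * (1 - u) ^ (b - 1)
      = Gamma a * Gamma b / Gamma (a + b) := by
  have hcast : Complex.betaIntegral a b
      = ((∫ u in Ioo (0 : ℝ) 1, u ^ (a - 1) * (1 - u) ^ (b - 1) : ℝ) : ℂ) := by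
    rw [Complex.betaIntegral, intervalIntegral.integral_of_le zero_le_one,
      integral_Ioc_eq_integral_Ioo, ← integral_complex_ofReal]
    refine setIntegral_congr_fun measurableSet_Ioo fun u hu => ?_
    push_cast [Complex.ofReal_cpow hu.1.le, Complex.ofReal_cpow (sub_nonneg.2 hu.2.le)]
    rfl
  rw [← Complex.ofReal_re (∫ u in Ioo (0 : ℝ) 1, _), ← hcast,
    ← ProbabilityTheory.beta_eq_betaIntegralReal a b ha hb, ProbabilityTheory.beta]

theorem integral_Ioo_rpow_neg_mul_one_sub_rpow {s : ℝ} (hs0 : 0 < s) (hs1 : s < 1) :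
    ∫ u in Ioo (0 : ℝ) 1, u ^ (-s) * (1 - u) ^ (s - 1) = π / sin (π * s) := by
  have h := integral_Ioo_rpow_mul_one_sub_rpow (sub_pos.2 hs1) hs0
  rwa [sub_sub_cancel_left, sub_add_cancel, Gamma_one, div_one, mul_comm,
    Gamma_mul_Gamma_one_sub] at h

section InverseSquareSubstitution

variable {r : ℝ}

lemma hasDerivAt_one_sub_sq_div_sq {x : ℝ} (hx : x ≠ 0) :
    HasDerivAt (fun x : ℝ => 1 - r ^ 2 / x ^ 2) (2 * r ^ 2 / x ^ 3) x := by
  have hsq : HasDerivAt (fun x : ℝ => x ^ 2) (2 * x) x := by simpa using hasDerivAt_pow 2 x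
  refine (((hasDerivAt_const x (r ^ 2)).div hsq (pow_ne_zero 2 hx)).const_sub 1).congr_deriv ?_
  field_simp
  ring

lemma strictMonoOn_one_sub_sq_div_sq (hr : r ≠ 0) :
    StrictMonoOn (fun x : ℝ => 1 - r ^ 2 / x ^ 2) (Ioi 0) := by
  intro x hx y _ hxy
  have : r ^ 2 / y ^ 2 < r ^ 2 / x ^ 2 :=
    div_lt_div_of_pos_left (by positivity) (pow_pos hx 2) (pow_lt_pow_left₀ hxy hx.le two_ne_zero)
  simpa using this

lemma image_one_sub_sq_div_sq_Ioi (hr : 0 < r) :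
    (fun x : ℝ => 1 - r ^ 2 / x ^ 2) '' Ioi r = Ioo 0 1 := by
  ext u
  constructor
  · rintro ⟨x, hx : r < x, rfl⟩
    have hx0 : 0 < x := hr.trans hx
    have hlt : r ^ 2 / x ^ 2 < 1 := (div_lt_one (by positivity)).2 (by gcongr)
    have hpos : 0 < r ^ 2 / x ^ 2 := by positivity
    constructor <;> linarith
  · rintro ⟨hu0, hu1⟩
    have hsqrt_pos : 0 < √(1 - u) := sqrt_pos.2 (by linarith)
    have hsqrt_lt : √(1 - u) < 1 := (sqrt_lt' one_pos).2 (by linarith)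
    refine ⟨r / √(1 - u), (lt_div_iff₀ hsqrt_pos).2 (by nlinarith), ?_⟩
    simp only [div_pow, sq_sqrt (by linarith : 0 ≤ 1 - u)]
    field_simp
    ring

lemma abs_deriv_smul_rpow_neg_mul_one_sub_rpow {s x : ℝ} (hr : 0 < r) (hx : r < x) :
    |2 * r ^ 2 / x ^ 3| • ((1 - r ^ 2 / x ^ 2) ^ (-s) * (1 - (1 - r ^ 2 / x ^ 2)) ^ (s - 1))
      = 2 * r ^ (2 * s) * ((x ^ 2 - r ^ 2) ^ (-s) * x⁻¹) := by
  have hx0 : 0 < x := hr.trans hx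
  have hgap : 0 < x ^ 2 - r ^ 2 := by nlinarith
  have hr2s : (r ^ 2) ^ s = r ^ (2 * s) := by
    rw [← rpow_natCast, ← rpow_mul hr.le, Nat.cast_ofNat]
  rw [smul_eq_mul, abs_of_pos (by positivity), sub_sub_cancel,
    show 1 - r ^ 2 / x ^ 2 = (x ^ 2 - r ^ 2) / x ^ 2 by field_simp,
    div_rpow hgap.le (by positivity), div_rpow (by positivity) (by positivity),
    rpow_neg (by positivity : (0 : ℝ) ≤ x ^ 2), rpow_sub (by positivity : (0 : ℝ) < x ^ 2),
    rpow_sub (by positivity : (0 : ℝ) < r ^ 2), rpow_one, rpow_one, ← hr2s]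
  have : (x ^ 2) ^ s ≠ 0 := by positivity
  field_simp

end InverseSquareSubstitution

theorem integral_Ioi_sq_sub_sq_rpow_neg_mul_inv {s r : ℝ} (hs0 : 0 < s) (hs1 : s < 1)
    (hr : 0 < r) :
    ∫ x in Ioi r, (x ^ 2 - r ^ 2) ^ (-s) * x⁻¹ = π / sin (π * s) / (2 * r ^ (2 * s)) := by
  have hsubst := integral_image_eq_integral_abs_deriv_smul measurableSet_Ioi
    (fun x hx => (hasDerivAt_one_sub_sq_div_sq (hr.trans hx).ne').hasDerivWithinAt)
    ((strictMonoOn_one_sub_sq_div_sq hr.ne').injOn.mono (Ioi_subset_Ioi hr.le))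
    (fun u => u ^ (-s) * (1 - u) ^ (s - 1))
  rw [image_one_sub_sq_div_sq_Ioi hr, integral_Ioo_rpow_neg_mul_one_sub_rpow hs0 hs1,
    setIntegral_congr_fun measurableSet_Ioi
      fun x hx => abs_deriv_smul_rpow_neg_mul_one_sub_rpow hr hx,
    integral_const_mul] at hsubst
  rw [hsubst, mul_div_cancel_left₀ _ (by positivity)]

/-- `n` times the volume of the unit ball is the area `σ_{n-1}` of the unit sphere. -/
theorem EuclideanSpace.natCast_mul_volume_real_ball_zero_one (n : ℕ) :
    (n : ℝ) * volume.real (Metric.ball (0 : EuclideanSpace ℝ (Fin n)) 1)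
      = 2 * π ^ ((n : ℝ) / 2) / Gamma ((n : ℝ) / 2) := by
  rcases n.eq_zero_or_pos with rfl | hn
  · simp -- both sides vanish, as `Gamma 0 = 0`
  have : Nonempty (Fin n) := ⟨⟨0, hn⟩⟩
  have hsqrt : √π ^ n = π ^ ((n : ℝ) / 2) := by
    rw [sqrt_eq_rpow, ← rpow_natCast, ← rpow_mul pi_pos.le, one_div_mul_eq_div]
  rw [measureReal_def, EuclideanSpace.volume_ball, Fintype.card_fin, ENNReal.ofReal_one, one_pow,
    one_mul, ENNReal.toReal_ofReal (by positivity), hsqrt, Gamma_add_one (by positivity)]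
  field_simp

theorem integral_Ioi_pow_smul_ite_div_rpow_mul_pow {n : ℕ} (hn : 1 ≤ n) {r : ℝ} (hr : 0 ≤ r)
    (s C : ℝ) :
    ∫ ρ in Ioi (0 : ℝ), ρ ^ (n - 1) •
        (if r < ρ then C / ((ρ ^ 2 - r ^ 2) ^ s * ρ ^ n) else 0)
      = C * ∫ ρ in Ioi r, (ρ ^ 2 - r ^ 2) ^ (-s) * ρ⁻¹ := by
  have hindicator : ∀ ρ ∈ Ioi (0 : ℝ), ρ ^ (n - 1) •
      (if r < ρ then C / ((ρ ^ 2 - r ^ 2) ^ s * ρ ^ n) else 0)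
        = (Ioi r).indicator (fun ρ => C * ((ρ ^ 2 - r ^ 2) ^ (-s) * ρ⁻¹)) ρ := by
    intro ρ (hρ : 0 < ρ)
    by_cases hrρ : r < ρ
    · have hgap : 0 < ρ ^ 2 - r ^ 2 := by nlinarith
      have hpow : ρ ^ n = ρ ^ (n - 1) * ρ := by rw [← pow_succ, Nat.sub_add_cancel hn]
      have : (ρ ^ 2 - r ^ 2) ^ s ≠ 0 := by positivity
      rw [if_pos hrρ, indicator_of_mem (mem_Ioi.2 hrρ), smul_eq_mul, rpow_neg hgap.le, hpow]
      field_simp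
    · rw [if_neg hrρ, indicator_of_notMem (notMem_Ioi.2 (not_lt.1 hrρ)), smul_zero]
  rw [setIntegral_congr_fun measurableSet_Ioi hindicator, setIntegral_indicator measurableSet_Ioi,
    Ioi_inter_Ioi, sup_eq_right.2 hr, integral_const_mul]

/-- The nonlocal mean-value kernel `A_r^{(s)}` of M. Riesz has total mass one:
`∫_{ℝⁿ} A_r^{(s)}(y) dy = 1`, where `A_r^{(s)}(y) = c(n,s) r^{2s}/((|y|²-r²)^s |y|ⁿ)`
for `|y| > r` and `0` otherwise, with `c(n,s) = 2 sin(πs)/(π σ_{n-1})` and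
`σ_{n-1} = 2π^{n/2}/Γ(n/2)`. -/
theorem riesz_mean_value_kernel_mass_one
    (n : ℕ) (hn : 1 ≤ n) (s : ℝ) (hs0 : 0 < s) (hs1 : s < 1) (r : ℝ) (hr : 0 < r) :
    ∫ y : EuclideanSpace ℝ (Fin n),
        (if r < ‖y‖ then
          (2 * Real.sin (π * s) / (π * (2 * π ^ ((n : ℝ) / 2) / Real.Gamma ((n : ℝ) / 2))))
            * r ^ (2 * s) / ((‖y‖ ^ 2 - r ^ 2) ^ s * ‖y‖ ^ n)
        else 0)
      = 1 := by
  have : Nonempty (Fin n) := ⟨⟨0, hn⟩⟩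
  set σ := 2 * π ^ ((n : ℝ) / 2) / Gamma ((n : ℝ) / 2) with hσ_def
  have hσ : 0 < σ := by
    have : 0 < Gamma ((n : ℝ) / 2) := Gamma_pos_of_pos (by positivity)
    positivity
  have hsin : 0 < sin (π * s) :=
    sin_pos_of_pos_of_lt_pi (by positivity) (by nlinarith [pi_pos])
  rw [integral_fun_norm_addHaar volume
      (fun ρ => if r < ρ then
        2 * sin (π * s) / (π * σ) * r ^ (2 * s) / ((ρ ^ 2 - r ^ 2) ^ s * ρ ^ n) else 0),
    finrank_euclideanSpace_fin, integral_Ioi_pow_smul_ite_div_rpow_mul_pow hn hr.le,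
    integral_Ioi_sq_sub_sq_rpow_neg_mul_inv hs0 hs1 hr, nsmul_eq_mul, smul_eq_mul, ← mul_assoc,
    EuclideanSpace.natCast_mul_volume_real_ball_zero_one, ← hσ_def]
  field_simp
end
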